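/- The piecewise linear map τ₂ on [0,1] defined by τ₂(x) = 3x for 0 ≤ x < 1/6, τ₂(x) = (3/2)x + 1/4 for 1/6 ≤ x < 1/2, τ₂(x) = −(3/2)x + 7/4 for 1/2 ≤ x < 5/6, and τ₂(x) = −3x + 3 for 5/6 ≤ x ≤ 1 preserves the absolutely continuous measure with density f₂ = (2/3)·χ_{[0,1/2]} + (4/3)·χ_{[1/2,1]}. -/

import Mathlib

/-!
On each of the intervals `[0,1/6)`, `[1/6,1/2]`, `(1/2,5/6)`, `[5/6,1]` the map τ₂ is affine
(at `1/2` both middle branches take the value `1`), with slopes `3, 3/2, -3/2, -3`, and it maps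
them onto `[0,1/2)`, `[1/2,1]`, `(1/2,1)`, `[0,1/2]`; the density f₂ is constant on each of them.
Hence, up to null endpoints, the f₂-measure of `τ₂⁻¹ A` is a combination of `|A ∩ [0,1/2]|` and
`|A ∩ (1/2,1]|`, and invariance reduces to the Perron–Frobenius balance
`(2/3)/3 + (4/3)/3 = 2/3` and `(2/3)/(3/2) + (4/3)/(3/2) = 4/3`.
-/

open MeasureTheory Set ENNReal

noncomputable section

/-- The upper piecewise linear map τ₂ of the motivating example. -/
def tau2 : ℝ → ℝ := fun x =>
  if x < 1/6 then 3 * x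
  else if x < 1/2 then (3/2) * x + 1/4
  else if x < 5/6 then -(3/2) * x + 7/4
  else -3 * x + 3

/-- The invariant density f₂ = (2/3)·χ_{[0,1/2]} + (4/3)·χ_{(1/2,1]}. -/
def dens2 : ℝ → ℝ≥0∞ := fun x => if x ≤ 1/2 then 2/3 else 4/3

lemma Real.volume_preimage_mul_add {a : ℝ} (ha : a ≠ 0) (b : ℝ) (s : Set ℝ) :
    volume ((fun x => a * x + b) ⁻¹' s) = ENNReal.ofReal |a⁻¹| * volume s := by
  rw [show (fun x => a * x + b) ⁻¹' s = (a * ·) ⁻¹' ((· + b) ⁻¹' s) from rfl,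
    Real.volume_preimage_mul_left ha, measure_preimage_add_right]

lemma volume_inter_preimage_of_eqOn_affine {τ : ℝ → ℝ} {a b : ℝ} (ha : a ≠ 0)
    {J K : Set ℝ} (hτ : EqOn τ (fun x => a * x + b) J)
    (hJK : J = (fun x => a * x + b) ⁻¹' K) (A : Set ℝ) :
    volume (J ∩ τ ⁻¹' A) = ENNReal.ofReal |a⁻¹| * volume (K ∩ A) := by
  rw [hτ.inter_preimage_eq, hJK, ← preimage_inter, Real.volume_preimage_mul_add ha]

lemma measurable_tau2 : Measurable tau2 := by
  unfold tau2
  refine Measurable.ite measurableSet_Iio (by fun_prop) ?_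
  refine Measurable.ite measurableSet_Iio (by fun_prop) ?_
  exact Measurable.ite measurableSet_Iio (by fun_prop) (by fun_prop)

lemma tau2_eqOn_Ico_zero_sixth : EqOn tau2 (fun x => 3 * x + 0) (Ico 0 (1/6)) := fun _ hx =>
  (if_pos hx.2).trans (add_zero _).symm

lemma tau2_eqOn_Icc_sixth_half : EqOn tau2 (fun x => 3/2 * x + 1/4) (Icc (1/6) (1/2)) :=
  fun x hx => by
  rcases hx.2.lt_or_eq with hlt | rfl
  · exact (if_neg hx.1.not_gt).trans (if_pos hlt)
  · norm_num [tau2]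

lemma tau2_eqOn_Ioo_half_fiveSixths :
    EqOn tau2 (fun x => -(3/2) * x + 7/4) (Ioo (1/2) (5/6)) := fun x hx => by
  unfold tau2
  rw [if_neg (by linarith [hx.1]), if_neg hx.1.not_gt, if_pos hx.2]

lemma tau2_eqOn_Icc_fiveSixths_one : EqOn tau2 (fun x => -3 * x + 3) (Icc (5/6) 1) :=
  fun x hx => by
  unfold tau2
  rw [if_neg (by linarith [hx.1]), if_neg (by linarith [hx.1]), if_neg hx.1.not_gt]

lemma volume_Icc_inter_preimage_tau2 {A : Set ℝ} (hA : MeasurableSet A) :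
    volume (Icc 0 (1/2) ∩ tau2 ⁻¹' A) =
      ENNReal.ofReal (1/3) * volume (Icc 0 (1/2) ∩ A) +
        ENNReal.ofReal (2/3) * volume (Ioc (1/2) 1 ∩ A) := by
  have hJ₁ : Ico (0:ℝ) (1/6) = (fun x => 3 * x + 0) ⁻¹' Ico 0 (1/2) := by
    ext x
    simp only [mem_Ico, mem_preimage]
    constructor <;> intro h <;> constructor <;> linarith [h.1, h.2]
  have hJ₂ : Icc (1/6:ℝ) (1/2) = (fun x => 3/2 * x + 1/4) ⁻¹' Icc (1/2) 1 := by
    ext x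
    simp only [mem_Icc, mem_preimage]
    constructor <;> intro h <;> constructor <;> linarith [h.1, h.2]
  rw [← Ico_union_Icc_eq_Icc (by norm_num : (0:ℝ) ≤ 1/6) (by norm_num),
    union_inter_distrib_right,
    measure_union ?_ (measurableSet_Icc.inter (hA.preimage measurable_tau2)),
    volume_inter_preimage_of_eqOn_affine (by norm_num) tau2_eqOn_Ico_zero_sixth hJ₁,
    volume_inter_preimage_of_eqOn_affine (by norm_num) tau2_eqOn_Icc_sixth_half hJ₂,
    measure_congr (Ico_ae_eq_Icc.inter (ae_eq_refl A)),
    measure_congr ((Ioc_ae_eq_Icc (a := (1/2:ℝ))).symm.inter (ae_eq_refl A))]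
  · norm_num
  · exact (Iio_disjoint_Ici le_rfl).mono (inter_subset_left.trans Ico_subset_Iio_self)
      (inter_subset_left.trans Icc_subset_Ici_self)

lemma volume_Ioc_inter_preimage_tau2 {A : Set ℝ} (hA : MeasurableSet A) :
    volume (Ioc (1/2) 1 ∩ tau2 ⁻¹' A) =
      ENNReal.ofReal (2/3) * volume (Ioc (1/2) 1 ∩ A) +
        ENNReal.ofReal (1/3) * volume (Icc 0 (1/2) ∩ A) := by
  have hJ₃ : Ioo (1/2:ℝ) (5/6) = (fun x => -(3/2) * x + 7/4) ⁻¹' Ioo (1/2) 1 := by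
    ext x
    simp only [mem_Ioo, mem_preimage]
    constructor <;> intro h <;> constructor <;> linarith [h.1, h.2]
  have hJ₄ : Icc (5/6:ℝ) 1 = (fun x => -3 * x + 3) ⁻¹' Icc 0 (1/2) := by
    ext x
    simp only [mem_Icc, mem_preimage]
    constructor <;> intro h <;> constructor <;> linarith [h.1, h.2]
  rw [← Ioo_union_Icc_eq_Ioc (by norm_num : (1/2:ℝ) < 5/6) (by norm_num),
    union_inter_distrib_right,
    measure_union ?_ (measurableSet_Icc.inter (hA.preimage measurable_tau2)),
    volume_inter_preimage_of_eqOn_affine (by norm_num) tau2_eqOn_Ioo_half_fiveSixths hJ₃,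
    volume_inter_preimage_of_eqOn_affine (by norm_num) tau2_eqOn_Icc_fiveSixths_one hJ₄,
    measure_congr (Ioo_ae_eq_Ioc.inter (ae_eq_refl A))]
  · norm_num
  · exact (Iio_disjoint_Ici le_rfl).mono (inter_subset_left.trans Ioo_subset_Iio_self)
      (inter_subset_left.trans Icc_subset_Ici_self)

lemma setLIntegral_dens2 {S : Set ℝ} (hS : MeasurableSet S) (hS01 : S ⊆ Icc 0 1) :
    ∫⁻ x in S, dens2 x =
      2/3 * volume (Icc 0 (1/2) ∩ S) + 4/3 * volume (Ioc (1/2) 1 ∩ S) := by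
  have hlow : EqOn dens2 (fun _ => 2/3) (Icc 0 (1/2) ∩ S) := fun _ hx => if_pos hx.1.2
  have hhigh : EqOn dens2 (fun _ => 4/3) (Ioc (1/2) 1 ∩ S) := fun _ hx => if_neg hx.1.1.not_ge
  conv_lhs => rw [← inter_eq_right.mpr hS01,
    ← Icc_union_Ioc_eq_Icc (by norm_num : (0:ℝ) ≤ 1/2) (by norm_num), union_inter_distrib_right]
  rw [lintegral_union (measurableSet_Ioc.inter hS) ?_,
    setLIntegral_congr_fun (measurableSet_Icc.inter hS) hlow,
    setLIntegral_congr_fun (measurableSet_Ioc.inter hS) hhigh,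
    setLIntegral_const, setLIntegral_const, mul_comm, mul_comm (volume _)]
  exact (Iic_disjoint_Ioi le_rfl).mono (inter_subset_left.trans Icc_subset_Iic_self)
    (inter_subset_left.trans Ioc_subset_Ioi_self)

lemma dens2_balance (u v : ℝ≥0∞) :
    2/3 * (ENNReal.ofReal (1/3) * u + ENNReal.ofReal (2/3) * v) +
      4/3 * (ENNReal.ofReal (2/3) * v + ENNReal.ofReal (1/3) * u) = 2/3 * u + 4/3 * v := by
  have h : (3 : ℝ≥0∞) * 3⁻¹ = 1 := ENNReal.mul_inv_cancel (by norm_num) (by norm_num)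
  rw [one_div, ENNReal.ofReal_inv_of_pos (by norm_num), ENNReal.ofReal_div_of_pos (by norm_num)]
  simp only [ENNReal.ofReal_ofNat, div_eq_mul_inv]
  calc _ = (2 * 3⁻¹ * u + 4 * 3⁻¹ * v) * (3 * 3⁻¹) := by ring
    _ = _ := by rw [h, mul_one]

/-- τ₂ preserves the absolutely continuous measure with density f₂. -/
theorem stmt1 :
    ∀ A : Set ℝ, MeasurableSet A → A ⊆ Set.Icc (0:ℝ) 1 →
      ∫⁻ x in Set.Icc (0:ℝ) 1 ∩ tau2 ⁻¹' A, dens2 x = ∫⁻ x in A, dens2 x := by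
  intro A hA hA01
  have hS : MeasurableSet (Icc (0:ℝ) 1 ∩ tau2 ⁻¹' A) :=
    measurableSet_Icc.inter (hA.preimage measurable_tau2)
  rw [setLIntegral_dens2 hS inter_subset_left, setLIntegral_dens2 hA hA01,
    ← inter_assoc, ← inter_assoc,
    inter_eq_left.mpr (Icc_subset_Icc_right (by norm_num)),
    inter_eq_left.mpr (Ioc_subset_Icc_self.trans (Icc_subset_Icc_left (by norm_num))),
    volume_Icc_inter_preimage_tau2 hA, volume_Ioc_inter_preimage_tau2 hA, dens2_balance]

end
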